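/- arXiv:1808.03270 — 2 statements merged into one kernel-verified Lean document; each statement's English description precedes it below -/
import Mathlib

section
/- Let γ : I → ℝ³ be a unit-speed rectifying curve with nowhere-vanishing curvature. Then the squared distance function ‖γ(s)‖² equals s² + 2cs + d for some constants c, d (i.e., it is a quadratic polynomial in the arclength parameter with leading coefficient 1). -/
noncomputable section

open scoped RealInnerProductSpace
open Set

/-- `ℝ³` as a Euclidean space. -/
abbrev E3 : Type := EuclideanSpace ℝ (Fin 3)

/-- The cross product on `ℝ³`. -/
def cross3 (x y : E3) : E3 :=
  WithLp.toLp 2 ![x 1 * y 2 - x 2 * y 1, x 2 * y 0 - x 0 * y 2, x 0 * y 1 - x 1 * y 0]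

/-- A `3 × 3` matrix acting on `ℝ³`. -/
def matVec (A : Matrix (Fin 3) (Fin 3) ℝ) (x : E3) : E3 :=
  WithLp.toLp 2 (fun i => ∑ j, A i j * x j)

/-- A differentiable real function with zero derivative on an open interval is
constant there. -/
lemma const_of_deriv_zero_on {f : ℝ → ℝ} (hf : Differentiable ℝ f) {a b x y : ℝ}
    (h : ∀ t ∈ Ioo a b, deriv f t = 0) (hx : x ∈ Ioo a b) (hy : y ∈ Ioo a b) :
    f x = f y := by
  refine (convex_Ioo a b).is_const_of_fderivWithin_eq_zero hf.differentiableOn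
    (fun t ht => ?_) hx hy
  rw [fderivWithin_of_isOpen isOpen_Ioo ht]
  have : HasDerivAt f 0 t := by
    have := (hf t).hasDerivAt
    rwa [h t ht] at this
  rw [this.hasFDerivAt.fderiv]
  ext
  simp

/-- For a unit-speed rectifying curve with nowhere-vanishing curvature, the
squared distance function is `s² + 2cs + d` for constants `c`, `d`. -/
theorem stmt3 (α β : ℝ) (γ : ℝ → E3) (hγ : ContDiff ℝ (⊤ : ℕ∞) γ)
    (hunit : ∀ s ∈ Ioo α β, ‖deriv γ s‖ = 1)
    (hkpos : ∀ s ∈ Ioo α β, 0 < ‖deriv (deriv γ) s‖)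
    (hrect : ∀ s ∈ Ioo α β, ⟪γ s, deriv (deriv γ) s⟫ = 0) :
    ∃ c d : ℝ, ∀ s ∈ Ioo α β, ‖γ s‖ ^ 2 = s ^ 2 + 2 * c * s + d := by
  rcases (Ioo α β).eq_empty_or_nonempty with hE | ⟨s₀, hs₀⟩
  · exact ⟨0, 0, fun s hs => absurd hs (by simp [hE])⟩
  have hdγ : Differentiable ℝ γ := hγ.differentiable (by simp)
  have hgi : ContDiff ℝ ((⊤ : ℕ∞) : WithTop ℕ∞) γ := hγ.of_le (by simp)
  have hγ' : ContDiff ℝ ((⊤ : ℕ∞) : WithTop ℕ∞) (deriv γ) := (contDiff_infty_iff_deriv.mp hgi).2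
  have hdγ' : Differentiable ℝ (deriv γ) := hγ'.differentiable (by simp)
  -- ψ s = ⟪γ' s, γ s⟫
  set ψ : ℝ → ℝ := fun s => ⟪deriv γ s, γ s⟫ with hψdef
  have hψ : ∀ x : ℝ, HasDerivAt ψ
      (⟪deriv γ x, deriv γ x⟫ + ⟪deriv (deriv γ) x, γ x⟫) x := fun x =>
    (hdγ' x).hasDerivAt.inner ℝ (hdγ x).hasDerivAt
  have hψd : Differentiable ℝ ψ := fun x => ((hψ x).differentiableAt)
  -- θ s = ψ s - s has zero derivative on the interval
  have hθ : ∀ s ∈ Ioo α β, deriv (fun t => ψ t - t) s = 0 := by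
    intro s hs
    have h1 : HasDerivAt (fun t => ψ t - t)
        ((⟪deriv γ s, deriv γ s⟫ + ⟪deriv (deriv γ) s, γ s⟫) - 1) s :=
      (hψ s).sub (hasDerivAt_id s)
    rw [h1.deriv]
    have e1 : ⟪deriv γ s, deriv γ s⟫ = 1 := by
      rw [real_inner_self_eq_norm_sq, hunit s hs]; norm_num
    have e2 : ⟪deriv (deriv γ) s, γ s⟫ = 0 := by
      rw [real_inner_comm]; exact hrect s hs
    rw [e1, e2]; ring
  set c : ℝ := ψ s₀ - s₀ with hc
  have hψeq : ∀ s ∈ Ioo α β, ψ s = s + c := by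
    intro s hs
    have := const_of_deriv_zero_on (f := fun t => ψ t - t)
      (hψd.sub differentiable_id) hθ hs hs₀
    linarith [this]
  -- F s = ⟪γ s, γ s⟫ - s² - 2cs has zero derivative on the interval
  set F : ℝ → ℝ := fun s => ⟪γ s, γ s⟫ - s ^ 2 - 2 * c * s with hF
  have hFd : ∀ x : ℝ, HasDerivAt F
      ((⟪γ x, deriv γ x⟫ + ⟪deriv γ x, γ x⟫) - 2 * x - 2 * c) x := by
    intro x
    have h1 : HasDerivAt (fun t : ℝ => ⟪γ t, γ t⟫)
        (⟪γ x, deriv γ x⟫ + ⟪deriv γ x, γ x⟫) x :=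
      (hdγ x).hasDerivAt.inner ℝ (hdγ x).hasDerivAt
    have h2 : HasDerivAt (fun t : ℝ => t ^ 2) (2 * x) x := by
      simpa using (hasDerivAt_pow 2 x)
    have h3 : HasDerivAt (fun t : ℝ => 2 * c * t) (2 * c) x := by
      simpa using (hasDerivAt_id x).const_mul (2 * c)
    exact (h1.sub h2).sub h3
  have hFzero : ∀ s ∈ Ioo α β, deriv F s = 0 := by
    intro s hs
    rw [(hFd s).deriv]
    have h3 : (⟪deriv γ s, γ s⟫ : ℝ) = s + c := hψeq s hs
    rw [real_inner_comm (deriv γ s) (γ s), h3]; ring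
  refine ⟨c, F s₀, fun s hs => ?_⟩
  have hFc : F s = F s₀ :=
    const_of_deriv_zero_on (fun x => (hFd x).differentiableAt) hFzero hs hs₀
  have : ⟪γ s, γ s⟫ = ‖γ s‖ ^ 2 := real_inner_self_eq_norm_sq _
  simp only [hF] at hFc
  simp only [hF]
  linarith [hFc, this]
end
end

section
/- Let γ : I → ℝ³ be a unit-speed rectifying curve with nowhere-vanishing curvature k and torsion τ. Then the component of γ along the binormal, ⟨γ(s), b(s)⟩, is a nonzero constant, and the ratio τ(s)/k(s) = (s + c)/μ is a nonconstant linear function of s (where μ = ⟨γ, b⟩ and c is a constant). -/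
noncomputable section

open scoped RealInnerProductSpace
open Set
open scoped ContDiff

lemma inner3 (x y : E3) : ⟪x, y⟫ = x 0 * y 0 + x 1 * y 1 + x 2 * y 2 := by
  simp [PiLp.inner_apply, Fin.sum_univ_three, RCLike.inner_apply, conj_trivial]; ring

lemma cross3_0 (x y : E3) : cross3 x y 0 = x 1 * y 2 - x 2 * y 1 := by simp [cross3]
lemma cross3_1 (x y : E3) : cross3 x y 1 = x 2 * y 0 - x 0 * y 2 := by simp [cross3]
lemma cross3_2 (x y : E3) : cross3 x y 2 = x 0 * y 1 - x 1 * y 0 := by simp [cross3]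

lemma cross_inner_left (x y : E3) : ⟪x, cross3 x y⟫ = 0 := by
  rw [inner3, cross3_0, cross3_1, cross3_2]; ring

lemma cross_inner_right (x y : E3) : ⟪y, cross3 x y⟫ = 0 := by
  rw [inner3, cross3_0, cross3_1, cross3_2]; ring

lemma expand3 (t n x : E3) (hT : ⟪t,t⟫ = 1) (hN : ⟪n,n⟫ = 1) (hP : ⟪t,n⟫ = 0) :
    x = ⟪x,t⟫ • t + ⟪x,n⟫ • n + ⟪x, cross3 t n⟫ • cross3 t n := by
  rw [inner3] at hT hN hP
  have hsum : ∀ (a b c : ℝ) (u v w : E3) (j : Fin 3),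
      (a • u + b • v + c • w) j = a * u j + b * v j + c * w j := by intros; rfl
  have h0 := cross3_0 t n; have h1 := cross3_1 t n; have h2 := cross3_2 t n
  ext j
  rw [hsum, inner3 x t, inner3 x n, inner3 x (cross3 t n), h0, h1, h2]
  fin_cases j
  · show x 0 = _ * t 0 + _ * n 0 + _ * cross3 t n 0
    rw [h0]
    linear_combination (-(x 0)*(n 0^2+n 1^2+n 2^2) + (x 0*n 0+x 1*n 1+x 2*n 2) * n 0) * hT
      + (-(x 0) + (x 0*t 0+x 1*t 1+x 2*t 2) * t 0) * hN
      + ((x 0) * (t 0*n 0+t 1*n 1+t 2*n 2) - (x 0*n 0+x 1*n 1+x 2*n 2) * t 0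
          - (x 0*t 0+x 1*t 1+x 2*t 2) * n 0) * hP
  · show x 1 = _ * t 1 + _ * n 1 + _ * cross3 t n 1
    rw [h1]
    linear_combination (-(x 1)*(n 0^2+n 1^2+n 2^2) + (x 0*n 0+x 1*n 1+x 2*n 2) * n 1) * hT
      + (-(x 1) + (x 0*t 0+x 1*t 1+x 2*t 2) * t 1) * hN
      + ((x 1) * (t 0*n 0+t 1*n 1+t 2*n 2) - (x 0*n 0+x 1*n 1+x 2*n 2) * t 1
          - (x 0*t 0+x 1*t 1+x 2*t 2) * n 1) * hP
  · show x 2 = _ * t 2 + _ * n 2 + _ * cross3 t n 2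
    rw [h2]
    linear_combination (-(x 2)*(n 0^2+n 1^2+n 2^2) + (x 0*n 0+x 1*n 1+x 2*n 2) * n 2) * hT
      + (-(x 2) + (x 0*t 0+x 1*t 1+x 2*t 2) * t 2) * hN
      + ((x 2) * (t 0*n 0+t 1*n 1+t 2*n 2) - (x 0*n 0+x 1*n 1+x 2*n 2) * t 2
          - (x 0*t 0+x 1*t 1+x 2*t 2) * n 2) * hP

lemma const_of_deriv_zero {f : ℝ → ℝ} {a b : ℝ}
    (hf : ∀ x ∈ Ioo a b, DifferentiableAt ℝ f x)
    (h0 : ∀ x ∈ Ioo a b, deriv f x = 0)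
    {x y : ℝ} (hx : x ∈ Ioo a b) (hy : y ∈ Ioo a b) : f x = f y := by
  refine (convex_Ioo a b).is_const_of_fderivWithin_eq_zero
    (fun z hz => (hf z hz).differentiableWithinAt) (fun z hz => ?_) hx hy
  rw [fderivWithin_of_isOpen isOpen_Ioo hz, ← toSpanSingleton_deriv, h0 z hz]
  ext
  simp

/-- For a unit-speed rectifying curve with nowhere-vanishing curvature, the
binormal component `⟪γ, b⟫` is a nonzero constant `μ₀` and
`τ/k = (s + c)/μ₀` is a nonconstant linear function of `s`. -/
theorem stmt5 (α β : ℝ) (hαβ : α < β) (γ : ℝ → E3) (hγ : ContDiff ℝ (⊤ : ℕ∞) γ)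
    (hunit : ∀ s ∈ Ioo α β, ‖deriv γ s‖ = 1)
    (k : ℝ → ℝ) (hk : ∀ s, k s = ‖deriv (deriv γ) s‖)
    (hkpos : ∀ s ∈ Ioo α β, 0 < k s)
    (t n bv : ℝ → E3)
    (ht : ∀ s, t s = deriv γ s)
    (hn : ∀ s, n s = (k s)⁻¹ • deriv (deriv γ) s)
    (hb : ∀ s, bv s = cross3 (t s) (n s))
    (τ : ℝ → ℝ)
    (hτ : ∀ s ∈ Ioo α β, deriv bv s = (-τ s) • n s)
    (hrect : ∀ s ∈ Ioo α β, ⟪γ s, n s⟫ = 0) :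
    ∃ μ₀ c : ℝ, μ₀ ≠ 0 ∧ (∀ s ∈ Ioo α β, ⟪γ s, bv s⟫ = μ₀) ∧
      ∀ s ∈ Ioo α β, τ s / k s = (s + c) / μ₀ := by
  -- basic differentiability
  have hone : (∞ : WithTop ℕ∞) ≠ 0 := by simp
  have hγ' : ContDiff ℝ ∞ γ := hγ.of_le (by simp)
  have hγd : Differentiable ℝ γ := hγ'.differentiable hone
  have hγ1 : ContDiff ℝ ∞ (deriv γ) := (contDiff_infty_iff_deriv.mp hγ').2
  have hγ1d : Differentiable ℝ (deriv γ) := hγ1.differentiable hone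
  have hγ2 : ContDiff ℝ ∞ (deriv (deriv γ)) := (contDiff_infty_iff_deriv.mp hγ1).2
  have hγ2d : Differentiable ℝ (deriv (deriv γ)) := hγ2.differentiable hone
  have hteq : t = deriv γ := funext ht
  have htd : Differentiable ℝ t := by rw [hteq]; exact hγ1d
  have hderiv_t : deriv t = deriv (deriv γ) := by rw [hteq]
  have hkne : ∀ s ∈ Ioo α β, k s ≠ 0 := fun s hs => (hkpos s hs).ne'
  have hg2ne : ∀ s ∈ Ioo α β, deriv (deriv γ) s ≠ 0 := by
    intro s hs h
    have h2 := hkpos s hs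
    rw [hk s, h, norm_zero] at h2
    exact lt_irrefl _ h2
  have hg2n : ∀ s ∈ Ioo α β, deriv (deriv γ) s = k s • n s := by
    intro s hs
    rw [hn s]
    exact (smul_inv_smul₀ (hkne s hs) _).symm
  -- differentiability of n and bv on the interval
  have hnd : ∀ s ∈ Ioo α β, DifferentiableAt ℝ n s := by
    intro s hs
    have hneq : n = fun u => (‖deriv (deriv γ) u‖)⁻¹ • deriv (deriv γ) u :=
      funext fun u => by rw [hn u, hk u]
    rw [hneq]
    have hnorm : DifferentiableAt ℝ (fun u => ‖deriv (deriv γ) u‖) s :=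
      (((contDiffAt_norm ℝ (n := ∞) (hg2ne s hs)).comp s hγ2.contDiffAt).differentiableAt hone)
    have hne : ‖deriv (deriv γ) s‖ ≠ 0 := by rw [← hk s]; exact hkne s hs
    exact (hnorm.inv hne).smul (hγ2d s)
  have hbd : ∀ s ∈ Ioo α β, DifferentiableAt ℝ bv s := by
    intro s hs
    have hbeq : bv = fun u => cross3 (t u) (n u) := funext hb
    rw [hbeq]
    have hti : ∀ i, DifferentiableAt ℝ (fun u => t u i) s :=
      differentiableAt_euclidean.mp (htd s)
    have hni : ∀ i, DifferentiableAt ℝ (fun u => n u i) s :=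
      differentiableAt_euclidean.mp (hnd s hs)
    refine differentiableAt_euclidean.mpr fun i => ?_
    fin_cases i
    · show DifferentiableAt ℝ (fun u => t u 1 * n u 2 - t u 2 * n u 1) s
      exact ((hti 1).fun_mul (hni 2)).fun_sub ((hti 2).fun_mul (hni 1))
    · show DifferentiableAt ℝ (fun u => t u 2 * n u 0 - t u 0 * n u 2) s
      exact ((hti 2).fun_mul (hni 0)).fun_sub ((hti 0).fun_mul (hni 2))
    · show DifferentiableAt ℝ (fun u => t u 0 * n u 1 - t u 1 * n u 0) s
      exact ((hti 0).fun_mul (hni 1)).fun_sub ((hti 1).fun_mul (hni 0))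
  -- orthonormality facts
  have hTT : ∀ s ∈ Ioo α β, ⟪t s, t s⟫ = 1 := by
    intro s hs
    rw [real_inner_self_eq_norm_mul_norm, ht s, hunit s hs, mul_one]
  have hg2t : ∀ s ∈ Ioo α β, ⟪deriv (deriv γ) s, t s⟫ = 0 := by
    intro s hs
    have hev : (fun u => ⟪t u, t u⟫) =ᶠ[nhds s] fun _ => (1:ℝ) := by
      filter_upwards [isOpen_Ioo.mem_nhds hs] with u hu using hTT u hu
    have h1 : deriv (fun u => ⟪t u, t u⟫) s = 0 := by
      rw [hev.deriv_eq]; exact deriv_const _ _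
    rw [deriv_inner_apply (𝕜 := ℝ) (htd s) (htd s), hderiv_t] at h1
    have h2 := real_inner_comm (t s) (deriv (deriv γ) s)
    linarith
  have hTN : ∀ s ∈ Ioo α β, ⟪t s, n s⟫ = 0 := by
    intro s hs
    rw [hn s, real_inner_smul_right, real_inner_comm, hg2t s hs, mul_zero]
  have hNN : ∀ s ∈ Ioo α β, ⟪n s, n s⟫ = 1 := by
    intro s hs
    rw [hn s, real_inner_smul_left, real_inner_smul_right,
      real_inner_self_eq_norm_mul_norm, ← hk s]
    field_simp [hkne s hs]
  have hTB : ∀ s, ⟪t s, bv s⟫ = 0 := fun s => by rw [hb s]; exact cross_inner_left _ _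
  have hBN : ∀ s, ⟪bv s, n s⟫ = 0 := fun s => by
    rw [hb s, real_inner_comm]; exact cross_inner_right _ _
  -- the tangential component is s + c
  set s0 : ℝ := (α + β) / 2 with hs0def
  have hs0 : s0 ∈ Ioo α β := by constructor <;> [skip; skip] <;> simp [hs0def] <;> linarith
  have hlamd : ∀ s, DifferentiableAt ℝ (fun u => ⟪γ u, t u⟫) s :=
    fun s => (hγd s).inner ℝ (htd s)
  have hlamderiv : ∀ s ∈ Ioo α β, deriv (fun u => ⟪γ u, t u⟫) s = 1 := by
    intro s hs
    rw [deriv_inner_apply (𝕜 := ℝ) (hγd s) (htd s), hderiv_t]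
    have h2 : ⟪γ s, deriv (deriv γ) s⟫ = 0 := by
      rw [hg2n s hs, real_inner_smul_right, hrect s hs, mul_zero]
    have h3 : ⟪deriv γ s, t s⟫ = 1 := by rw [← ht s]; exact hTT s hs
    rw [h2, h3]; ring
  set c : ℝ := ⟪γ s0, t s0⟫ - s0 with hcdef
  have hlam : ∀ s ∈ Ioo α β, ⟪γ s, t s⟫ = s + c := by
    intro s hs
    have hGd : ∀ x ∈ Ioo α β, DifferentiableAt ℝ (fun u => ⟪γ u, t u⟫ - u) x :=
      fun x _ => (hlamd x).sub differentiableAt_id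
    have hG0 : ∀ x ∈ Ioo α β, deriv (fun u => ⟪γ u, t u⟫ - u) x = 0 := by
      intro x hx
      rw [deriv_fun_sub (hlamd x) differentiableAt_fun_id, hlamderiv x hx, deriv_id'']
      ring
    have := const_of_deriv_zero hGd hG0 hs hs0
    rw [hcdef]
    linarith
  -- the binormal component is a constant μ₀
  set μ₀ : ℝ := ⟪γ s0, bv s0⟫ with hμdef
  have hμconst : ∀ s ∈ Ioo α β, ⟪γ s, bv s⟫ = μ₀ := by
    intro s hs
    refine const_of_deriv_zero (fun x hx => (hγd x).inner ℝ (hbd x hx)) ?_ hs hs0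
    intro x hx
    rw [deriv_inner_apply (𝕜 := ℝ) (hγd x) (hbd x hx), hτ x hx, real_inner_smul_right,
      hrect x hx, ← ht x, hTB x]
    ring
  -- the key relation μ₀ * τ = (s + c) * k
  have hkey : ∀ s ∈ Ioo α β, μ₀ * τ s = (s + c) * k s := by
    intro s hs
    -- ⟪γ, n'⟫ = 0
    have hγn' : ⟪γ s, deriv n s⟫ = 0 := by
      have hev : (fun u => ⟪γ u, n u⟫) =ᶠ[nhds s] fun _ => (0:ℝ) := by
        filter_upwards [isOpen_Ioo.mem_nhds hs] with u hu using hrect u hu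
      have h1 : deriv (fun u => ⟪γ u, n u⟫) s = 0 := by
        rw [hev.deriv_eq]; exact deriv_const _ _
      rw [deriv_inner_apply (𝕜 := ℝ) (hγd s) (hnd s hs)] at h1
      have h2 : ⟪deriv γ s, n s⟫ = 0 := by rw [← ht s]; exact hTN s hs
      rw [h2] at h1
      linarith
    -- ⟪t, n'⟫ = -k
    have htn' : ⟪t s, deriv n s⟫ = -k s := by
      have hev : (fun u => ⟪t u, n u⟫) =ᶠ[nhds s] fun _ => (0:ℝ) := by
        filter_upwards [isOpen_Ioo.mem_nhds hs] with u hu using hTN u hu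
      have h1 : deriv (fun u => ⟪t u, n u⟫) s = 0 := by
        rw [hev.deriv_eq]; exact deriv_const _ _
      rw [deriv_inner_apply (𝕜 := ℝ) (htd s) (hnd s hs), hderiv_t] at h1
      have h2 : ⟪deriv (deriv γ) s, n s⟫ = k s := by
        rw [hg2n s hs, real_inner_smul_left, hNN s hs, mul_one]
      rw [h2] at h1
      linarith
    -- ⟪bv, n'⟫ = τ
    have hbn' : ⟪bv s, deriv n s⟫ = τ s := by
      have hev : (fun u => ⟪bv u, n u⟫) =ᶠ[nhds s] fun _ => (0:ℝ) := by
        filter_upwards with u using hBN u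
      have h1 : deriv (fun u => ⟪bv u, n u⟫) s = 0 := by
        rw [hev.deriv_eq]; exact deriv_const _ _
      rw [deriv_inner_apply (𝕜 := ℝ) (hbd s hs) (hnd s hs), hτ s hs, real_inner_smul_left,
        hNN s hs] at h1
      linarith
    -- expand γ in the Frenet frame
    have hexp := expand3 (t s) (n s) (γ s) (hTT s hs) (hNN s hs) (hTN s hs)
    rw [← hb s] at hexp
    have h0 : ⟪γ s, deriv n s⟫ =
        ⟪γ s, t s⟫ * ⟪t s, deriv n s⟫ + ⟪γ s, n s⟫ * ⟪n s, deriv n s⟫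
          + ⟪γ s, bv s⟫ * ⟪bv s, deriv n s⟫ := by
      conv_lhs => rw [hexp]
      rw [inner_add_left, inner_add_left, real_inner_smul_left, real_inner_smul_left,
        real_inner_smul_left]
    rw [hγn', htn', hrect s hs, hlam s hs, hμconst s hs, hbn'] at h0
    linarith
  -- μ₀ ≠ 0
  have hμne : μ₀ ≠ 0 := by
    intro h0
    have key : ∀ s ∈ Ioo α β, s = -c := by
      intro s hs
      have := hkey s hs
      rw [h0, zero_mul] at this
      have hk' := hkne s hs
      have : s + c = 0 := by
        rcases mul_eq_zero.mp this.symm with h | h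
        · exact h
        · exact absurd h hk'
      linarith
    have h1 := key s0 hs0
    set s1 : ℝ := (3 * α + β) / 4 with hs1def
    have hs1 : s1 ∈ Ioo α β := by constructor <;> simp [hs1def] <;> linarith
    have h2 := key s1 hs1
    rw [hs0def] at h1
    rw [hs1def] at h2
    linarith
  refine ⟨μ₀, c, hμne, hμconst, fun s hs => ?_⟩
  rw [div_eq_div_iff (hkne s hs) hμne]
  linear_combination hkey s hs
end
end
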